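/- Let X be a relational HDA and ST(X) the ST-automaton with states the cells of X labelled by ev, transitions (p, ⟨ev(q)∖A, ev(q), ev(q)⟩, q) for every q and A ⊆ ev(q) with p ∈ δ⁰_A(q), and (q, ⟨ev(q), ev(q), ev(q)∖B⟩, r) for every q and B ⊆ ev(q) with r ∈ δ¹_B(q), source and target the first and third components, and initial/accepting states those of X. Then there is a one-to-one correspondence between paths in X and paths in ST(X) preserving recognized ipomsets, sources, targets and acceptance; in particular L(ST(X)) = L(X). -/

import Mathlib

open scoped Classical

namespace HDA

/-! ### Ipomsets over a fixed alphabet -/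

structure PreIpomset (σ : Type) : Type 1 where
  carrier : Type
  fin : Finite carrier
  lt : carrier → carrier → Prop
  evord : carrier → carrier → Prop
  S : Set carrier
  T : Set carrier
  lab : carrier → σ

namespace PreIpomset

variable {σ : Type}

/-- The precedence order is empty. -/
def Discrete (P : PreIpomset σ) : Prop := ∀ x y, ¬ P.lt x y

/-- Validity: `lt` is a strict partial order which is an interval order, `evord` is acyclic,
for distinct events exactly one of the four relations holds, sources are minimal and
targets are maximal.  (All ipomsets considered are interval.) -/
structure IsIpomset (P : PreIpomset σ) : Prop where
  lt_trans : ∀ x y z, P.lt x y → P.lt y z → P.lt x z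
  lt_irrefl : ∀ x, ¬ P.lt x x
  evord_acyclic : ∀ x, ¬ Relation.TransGen P.evord x x
  total : ∀ x y : P.carrier, x ≠ y → P.lt x y ∨ P.lt y x ∨ P.evord x y ∨ P.evord y x
  lt_not_evord : ∀ x y, P.lt x y → ¬ P.evord x y ∧ ¬ P.evord y x
  src_min : ∀ x ∈ P.S, ∀ y, ¬ P.lt y x
  tgt_max : ∀ x ∈ P.T, ∀ y, ¬ P.lt x y
  interval : ∀ w x y z, P.lt w x → P.lt y z → P.lt w z ∨ P.lt y x

/-- A conclist: a discrete ipomset with empty interfaces. -/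
def IsConclist (P : PreIpomset σ) : Prop :=
  P.IsIpomset ∧ P.Discrete ∧ P.S = ∅ ∧ P.T = ∅

/-- A starter `⟨U∖A,U,U⟩`. -/
def IsStarter (P : PreIpomset σ) : Prop := P.IsIpomset ∧ P.Discrete ∧ P.T = Set.univ

/-- A terminator `⟨U,U,U∖B⟩`. -/
def IsTerminator (P : PreIpomset σ) : Prop := P.IsIpomset ∧ P.Discrete ∧ P.S = Set.univ

/-- An identity `⟨U,U,U⟩`. -/
def IsIdentityIpomset (P : PreIpomset σ) : Prop :=
  P.IsIpomset ∧ P.Discrete ∧ P.S = Set.univ ∧ P.T = Set.univ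

def IsProperStarter (P : PreIpomset σ) : Prop := P.IsStarter ∧ P.S ≠ Set.univ

def IsProperTerminator (P : PreIpomset σ) : Prop := P.IsTerminator ∧ P.T ≠ Set.univ

/-- Isomorphism of (pre)ipomsets. -/
def Iso (P Q : PreIpomset σ) : Prop :=
  ∃ f : P.carrier ≃ Q.carrier,
    (∀ x y, P.lt x y ↔ Q.lt (f x) (f y)) ∧
    (∀ x y, P.evord x y ↔ Q.evord (f x) (f y)) ∧
    (∀ x, x ∈ P.S ↔ f x ∈ Q.S) ∧
    (∀ x, x ∈ P.T ↔ f x ∈ Q.T) ∧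
    (∀ x, Q.lab (f x) = P.lab x)

/-- Restriction to a subset of events, with empty interfaces. -/
def restrict (P : PreIpomset σ) (K : Set P.carrier) : PreIpomset σ where
  carrier := {x : P.carrier // x ∈ K}
  fin := by haveI := P.fin; exact inferInstance
  lt := fun x y => P.lt x.val y.val
  evord := fun x y => P.evord x.val y.val
  S := ∅
  T := ∅
  lab := fun x => P.lab x.val

/-- The source interface of `P` as a conclist. -/
def srcIface (P : PreIpomset σ) : PreIpomset σ := P.restrict P.S

/-- The target interface of `P` as a conclist. -/
def tgtIface (P : PreIpomset σ) : PreIpomset σ := P.restrict P.T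

/-- The underlying conclist (forget interfaces). -/
def conclistOf (P : PreIpomset σ) : PreIpomset σ := { P with S := ∅, T := ∅ }

/-- The identity ipomset `⟨U,U,U⟩` on the conclist underlying `P`. -/
def idOf (P : PreIpomset σ) : PreIpomset σ := { P with S := Set.univ, T := Set.univ }

/-- The discrete ipomset `⟨S,U,T⟩` on the conclist underlying `P`. -/
def withIfaces (P : PreIpomset σ) (S T : Set P.carrier) : PreIpomset σ :=
  { P with S := S, T := T }

/-- The starter `⟨U∖A,U,U⟩` on the conclist underlying `P`. -/
def starter (P : PreIpomset σ) (A : Set P.carrier) : PreIpomset σ :=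
  { P with S := Aᶜ, T := Set.univ }

/-- The terminator `⟨U,U,U∖B⟩` on the conclist underlying `P`. -/
def terminator (P : PreIpomset σ) (B : Set P.carrier) : PreIpomset σ :=
  { P with S := Set.univ, T := Bᶜ }

/-- A matching `T_P ≅ S_Q`, i.e. an isomorphism of interface conclists
along which `P` and `Q` may be glued. -/
structure Matching (P Q : PreIpomset σ) : Type where
  g : {x : P.carrier // x ∈ P.T} ≃ {y : Q.carrier // y ∈ Q.S}
  evord_iff : ∀ x y, P.evord x.val y.val ↔ Q.evord (g x).val (g y).val
  lab_eq : ∀ x, Q.lab (g x).val = P.lab x.val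

def gluePOf (P Q : PreIpomset σ) :
    P.carrier ⊕ {y : Q.carrier // y ∉ Q.S} → Option P.carrier
  | Sum.inl x => some x
  | Sum.inr _ => none

noncomputable def glueQOf (P Q : PreIpomset σ) (m : Matching P Q) :
    P.carrier ⊕ {y : Q.carrier // y ∉ Q.S} → Option Q.carrier
  | Sum.inl x => if h : x ∈ P.T then some (m.g ⟨x, h⟩).val else none
  | Sum.inr y => some y.val

/-- The gluing `P * Q` along a matching `T_P ≅ S_Q`. -/
noncomputable def glue (P Q : PreIpomset σ) (m : Matching P Q) : PreIpomset σ where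
  carrier := P.carrier ⊕ {y : Q.carrier // y ∉ Q.S}
  fin := by haveI := P.fin; haveI := Q.fin; exact inferInstance
  lt := fun u v =>
    (∃ x x', gluePOf P Q u = some x ∧ gluePOf P Q v = some x' ∧ P.lt x x') ∨
    (∃ y y', glueQOf P Q m u = some y ∧ glueQOf P Q m v = some y' ∧ Q.lt y y') ∨
    ((∃ x, gluePOf P Q u = some x ∧ x ∉ P.T) ∧
     (∃ y, glueQOf P Q m v = some y ∧ y ∉ Q.S))
  evord := fun u v =>
    (∃ x x', gluePOf P Q u = some x ∧ gluePOf P Q v = some x' ∧ P.evord x x') ∨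
    (∃ y y', glueQOf P Q m u = some y ∧ glueQOf P Q m v = some y' ∧ Q.evord y y')
  S := {u | ∃ x, gluePOf P Q u = some x ∧ x ∈ P.S}
  T := {u | ∃ y, glueQOf P Q m u = some y ∧ y ∈ Q.T}
  lab := Sum.elim P.lab fun y => Q.lab y.val

/-- `R` is (isomorphic to) the gluing `P * Q`; in particular `T_P ≅ S_Q`. -/
def GlueRel (P Q R : PreIpomset σ) : Prop :=
  ∃ m : Matching P Q, Iso (glue P Q m) R

/-- A choice of gluing (used when a matching is known to exist). -/
noncomputable def glueChoice (P Q : PreIpomset σ) : PreIpomset σ :=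
  if h : Nonempty (Matching P Q) then glue P Q h.some else P

/-- `GluesTo l R`: `R` is the gluing of the nonempty list `l` of ipomsets. -/
inductive GluesTo : List (PreIpomset σ) → PreIpomset σ → Prop
  | single {P R : PreIpomset σ} : Iso P R → GluesTo [P] R
  | cons {P : PreIpomset σ} {l : List (PreIpomset σ)} {R' R : PreIpomset σ} :
      GluesTo l R' → GlueRel P R' R → GluesTo (P :: l) R

/-- Proper starters and proper terminators alternate. -/
def Alternating (l : List (PreIpomset σ)) : Prop :=
  l.Chain' fun P Q => (IsProperStarter P ∧ IsProperTerminator Q) ∨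
    (IsProperTerminator P ∧ IsProperStarter Q)

/-- `l` is a sparse step decomposition of `R`: either a single identity, or an
alternating sequence of proper starters and proper terminators gluing to `R`. -/
def IsSparseDecomp (l : List (PreIpomset σ)) (R : PreIpomset σ) : Prop :=
  GluesTo l R ∧
  ((∃ I, l = [I] ∧ IsIdentityIpomset I) ∨
   ((∀ P ∈ l, IsProperStarter P ∨ IsProperTerminator P) ∧ Alternating l))

/-- `P ∈ iPoms^q`: the sparse step decomposition of `P` does not end with a
proper starter (i.e. it ends with a terminator or is a single identity). -/
def InQ (P : PreIpomset σ) : Prop :=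
  ∃ l, IsSparseDecomp l P ∧ ∀ Q, l.getLast? = some Q → ¬ IsProperStarter Q

end PreIpomset

open PreIpomset

variable {σ : Type}

/-! ### Languages and rational operations -/

def glueLang (L M : Set (PreIpomset σ)) : Set (PreIpomset σ) :=
  {R | ∃ P ∈ L, ∃ Q ∈ M, GlueRel P Q R}

def powLang (L : Set (PreIpomset σ)) : ℕ → Set (PreIpomset σ)
  | 0 => L
  | n + 1 => glueLang L (powLang L n)

/-- `L⁺ = ⋃_{n ≥ 1} Lⁿ`. -/
def plusLang (L : Set (PreIpomset σ)) : Set (PreIpomset σ) := ⋃ n, powLang L n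

/-- Rational languages of (interval) ipomsets: generated from `∅` and singletons
(up to isomorphism) of starters and terminators by union, gluing composition and plus. -/
inductive Rational : Set (PreIpomset σ) → Prop
  | empty : Rational ∅
  | single {P : PreIpomset σ} : IsStarter P ∨ IsTerminator P → Rational {Q | Iso Q P}
  | union {L M : Set (PreIpomset σ)} : Rational L → Rational M → Rational (L ∪ M)
  | concat {L M : Set (PreIpomset σ)} : Rational L → Rational M → Rational (glueLang L M)
  | plus {L : Set (PreIpomset σ)} : Rational L → Rational (plusLang L)

/-! ### P-automata -/

structure PAutomaton (σ : Type) : Type 1 where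
  Q : Type
  E : Type
  src : E → Q
  tgt : E → Q
  lab : E → PreIpomset σ
  mu : Q → PreIpomset σ
  start : Set Q
  accept : Set Q

namespace PAutomaton

variable {σ : Type}

/-- The axioms of a P-automaton: finite sets of states and transitions, states
labelled by conclists, transitions by interval ipomsets, with
`μ(s(e)) ≅ S_{λ(e)}` and `μ(t(e)) ≅ T_{λ(e)}`. -/
def IsPA (A : PAutomaton σ) : Prop :=
  Finite A.Q ∧ Finite A.E ∧
  (∀ q, (A.mu q).IsConclist) ∧ (∀ e, (A.lab e).IsIpomset) ∧
  (∀ e, Iso (A.lab e).srcIface (A.mu (A.src e))) ∧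
  (∀ e, Iso (A.lab e).tgtIface (A.mu (A.tgt e)))

/-- ST-automaton: every label is a starter or a terminator. -/
def IsST (A : PAutomaton σ) : Prop := ∀ e, IsStarter (A.lab e) ∨ IsTerminator (A.lab e)

/-- gST-automaton: every label is discrete. -/
def IsGST (A : PAutomaton σ) : Prop := ∀ e, (A.lab e).Discrete

/-- No transition is labelled by an identity. -/
def NoSilent (A : PAutomaton σ) : Prop := ∀ e, ¬ IsIdentityIpomset (A.lab e)

/-- A reduced gST-automaton: no silent transitions and conditions (a)–(f). -/
def Reduced (A : PAutomaton σ) : Prop :=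
  NoSilent A ∧
  (∀ e, A.tgt e ∉ A.start) ∧
  (∀ e, A.src e ∉ A.accept) ∧
  (∀ e, (A.lab e).T = Set.univ → A.tgt e ∈ A.accept) ∧
  (∀ e, (A.lab e).S = Set.univ → A.src e ∈ A.start) ∧
  (∀ e e', A.src e ∈ A.start → A.src e' = A.src e → e' = e) ∧
  (∀ e e', A.tgt e ∈ A.accept → A.tgt e' = A.tgt e → e' = e)

/-- Paths in a P-automaton, from a state to a state. -/
inductive Path (A : PAutomaton σ) : A.Q → A.Q → Type
  | nil (q : A.Q) : Path A q q
  | cons (e : A.E) {r : A.Q} (rest : Path A (A.tgt e) r) : Path A (A.src e) r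

/-- The (interval) ipomset recognized by a path, up to isomorphism:
the gluing of the labels of its transitions (an identity for a constant path). -/
inductive Rec {A : PAutomaton σ} : ∀ {p r : A.Q}, Path A p r → PreIpomset σ → Prop
  | nil (q : A.Q) (R : PreIpomset σ) : Iso (A.mu q).idOf R → Rec (Path.nil q) R
  | cons (e : A.E) {r : A.Q} (rest : Path A (A.tgt e) r) {R' R : PreIpomset σ} :
      Rec rest R' → GlueRel (A.lab e) R' R → Rec (Path.cons e rest) R

/-- The language of a P-automaton. -/
def lang (A : PAutomaton σ) : Set (PreIpomset σ) :=
  {R | ∃ p r, ∃ α : Path A p r, p ∈ A.start ∧ r ∈ A.accept ∧ Rec α R}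

/-- Dimension of a transition. -/
noncomputable def dim (A : PAutomaton σ) (e : A.E) : ℕ := Nat.card (A.lab e).carrier

/-- Number of bad starter transitions of dimension `n`. -/
noncomputable def bst (A : PAutomaton σ) (n : ℕ) : ℕ :=
  Nat.card {e : A.E // IsProperStarter (A.lab e) ∧ A.tgt e ∉ A.accept ∧ A.dim e = n}

/-- Number of bad terminator transitions of dimension `n`. -/
noncomputable def btt (A : PAutomaton σ) (n : ℕ) : ℕ :=
  Nat.card {e : A.E // IsProperTerminator (A.lab e) ∧ A.src e ∉ A.start ∧ A.dim e = n}

/-- The automaton `𝒜_c`: remove the starter transition `c`; for every transition `e`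
out of `t(c)` add a transition `e*` from `s(c)` to `t(e)` labelled `λ(c) * λ(e)`. -/
noncomputable def Ac (A : PAutomaton σ) (c : A.E) : PAutomaton σ where
  Q := A.Q
  E := {e : A.E // e ≠ c} ⊕ {e : A.E // A.src e = A.tgt c}
  src := Sum.elim (fun e => A.src e.val) fun _ => A.src c
  tgt := Sum.elim (fun e => A.tgt e.val) fun e => A.tgt e.val
  lab := Sum.elim (fun e => A.lab e.val) fun e => glueChoice (A.lab c) (A.lab e.val)
  mu := A.mu
  start := A.start
  accept := A.accept

/-- Disjoint union of two P-automata. -/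
def sumAut (A B : PAutomaton σ) : PAutomaton σ where
  Q := A.Q ⊕ B.Q
  E := A.E ⊕ B.E
  src := Sum.elim (Sum.inl ∘ A.src) (Sum.inr ∘ B.src)
  tgt := Sum.elim (Sum.inl ∘ A.tgt) (Sum.inr ∘ B.tgt)
  lab := Sum.elim A.lab B.lab
  mu := Sum.elim A.mu B.mu
  start := Sum.inl '' A.start ∪ Sum.inr '' B.start
  accept := Sum.inl '' A.accept ∪ Sum.inr '' B.accept

/-- Concatenation `𝒜 * ℬ`: disjoint union together with identity-labelled transitions
from accepting states of `𝒜` to initial states of `ℬ` with isomorphic state labels. -/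
def concatAut (A B : PAutomaton σ) : PAutomaton σ where
  Q := A.Q ⊕ B.Q
  E := A.E ⊕ B.E ⊕
    {pq : A.Q × B.Q // pq.1 ∈ A.accept ∧ pq.2 ∈ B.start ∧ Iso (A.mu pq.1) (B.mu pq.2)}
  src := Sum.elim (Sum.inl ∘ A.src)
    (Sum.elim (Sum.inr ∘ B.src) fun pq => Sum.inl pq.val.1)
  tgt := Sum.elim (Sum.inl ∘ A.tgt)
    (Sum.elim (Sum.inr ∘ B.tgt) fun pq => Sum.inr pq.val.2)
  lab := Sum.elim A.lab (Sum.elim B.lab fun pq => (A.mu pq.val.1).idOf)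
  mu := Sum.elim A.mu B.mu
  start := Sum.inl '' A.start
  accept := Sum.inr '' B.accept

/-- Kleene plus `𝒜⁺`: add identity-labelled transitions from accepting states
to initial states with isomorphic state labels. -/
def plusAut (A : PAutomaton σ) : PAutomaton σ where
  Q := A.Q
  E := A.E ⊕
    {pq : A.Q × A.Q // pq.1 ∈ A.accept ∧ pq.2 ∈ A.start ∧ Iso (A.mu pq.1) (A.mu pq.2)}
  src := Sum.elim A.src fun pq => pq.val.1
  tgt := Sum.elim A.tgt fun pq => pq.val.2
  lab := Sum.elim A.lab fun pq => (A.mu pq.val.1).idOf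
  mu := A.mu
  start := A.start
  accept := A.accept

end PAutomaton

/-! ### Partial HDAs -/

/-- `g` exhibits `V` as the sub-conclist of `U` obtained by removing the events in `K`. -/
def IsFaceEmbed (U : PreIpomset σ) (K : Set U.carrier) (V : PreIpomset σ)
    (g : V.carrier → U.carrier) : Prop :=
  Function.Injective g ∧ Set.range g = Kᶜ ∧
  (∀ u v, V.evord u v ↔ U.evord (g u) (g v)) ∧
  (∀ u, U.lab (g u) = V.lab u)

/-- The data of a partial higher-dimensional automaton: cells labelled by conclists,
partial face maps, initial and accepting cells. -/
structure PrePHDA (σ : Type) : Type 1 where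
  cell : Type
  ev : cell → PreIpomset σ
  face : (x : cell) → Set (ev x).carrier → Set (ev x).carrier → Option cell
  start : Set cell
  accept : Set cell

namespace PrePHDA

variable {σ : Type}

/-- The lax precubical identity: whenever `δ_{A,B}(x)` and `δ_{C,D}(δ_{A,B}(x))` are
defined, `δ_{A∪C,B∪D}(x)` is defined and equal to the composite. -/
def IsLax (X : PrePHDA σ) : Prop :=
  ∀ x (A B : Set (X.ev x).carrier) y, X.face x A B = some y →
    ∀ g, IsFaceEmbed (X.ev x) (A ∪ B) (X.ev y) g →
      ∀ (C D : Set (X.ev y).carrier) z, X.face y C D = some z →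
        X.face x (A ∪ g '' C) (B ∪ g '' D) = some z

/-- The axioms of a partial HDA. -/
def IsPHDA (X : PrePHDA σ) : Prop :=
  (∀ x, (X.ev x).IsConclist) ∧
  (∀ x, X.face x ∅ ∅ = some x) ∧
  (∀ x A B y, X.face x A B = some y →
    Disjoint A B ∧ ∃ g, IsFaceEmbed (X.ev x) (A ∪ B) (X.ev y) g) ∧
  IsLax X

/-- Strictness: `δ_{C,D} ∘ δ_{A,B} = δ_{A∪C,B∪D}` as partial functions. -/
def IsStrict (X : PrePHDA σ) : Prop :=
  IsPHDA X ∧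
  (∀ x (A B : Set (X.ev x).carrier) y, X.face x A B = some y →
    ∀ g, IsFaceEmbed (X.ev x) (A ∪ B) (X.ev y) g →
      ∀ C D : Set (X.ev y).carrier,
        X.face x (A ∪ g '' C) (B ∪ g '' D) = X.face y C D) ∧
  (∀ x (A B C D : Set (X.ev x).carrier),
    Disjoint (A ∪ C) (B ∪ D) → C ∪ D ⊆ (A ∪ B)ᶜ →
    X.face x A B = none → X.face x (A ∪ C) (B ∪ D) = none)

/-- Paths in a partial HDA: sequences of upsteps and downsteps. -/
inductive Path (X : PrePHDA σ) : X.cell → X.cell → Type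
  | nil (x : X.cell) : Path X x x
  | up {x z : X.cell} (y : X.cell) (A : Set (X.ev y).carrier)
      (h : X.face y A ∅ = some x) (rest : Path X y z) : Path X x z
  | down {z w : X.cell} (y : X.cell) (B : Set (X.ev y).carrier)
      (h : X.face y ∅ B = some z) (rest : Path X z w) : Path X y w

/-- Directions of the steps of a path (`true` = upstep). -/
def Path.dirs {X : PrePHDA σ} : {x z : X.cell} → Path X x z → List Bool
  | _, _, .nil _ => []
  | _, _, .up _ _ _ rest => true :: rest.dirs
  | _, _, .down _ _ _ rest => false :: rest.dirs

/-- A path is sparse if upsteps and downsteps alternate. -/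
def Path.Sparse {X : PrePHDA σ} {x z : X.cell} (α : Path X x z) : Prop :=
  α.dirs.Chain' (· ≠ ·)

/-- Concatenation of paths. -/
def Path.comp {X : PrePHDA σ} : {x y z : X.cell} → Path X x y → Path X y z → Path X x z
  | _, _, _, .nil _, β => β
  | _, _, _, .up y A h rest, β => .up y A h (rest.comp β)
  | _, _, _, .down y B h rest, β => .down y B h (rest.comp β)

/-- The ipomset recognized by a path, up to isomorphism: the gluing of the starters
and terminators of its steps (an identity for a constant path). -/
inductive Rec {X : PrePHDA σ} : ∀ {x z : X.cell}, Path X x z → PreIpomset σ → Prop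
  | nil (x : X.cell) (R : PreIpomset σ) :
      Iso (X.ev x).idOf R → Rec (Path.nil x) R
  | up {x z : X.cell} (y : X.cell) (A : Set (X.ev y).carrier)
      (h : X.face y A ∅ = some x) (rest : Path X y z) {R' R : PreIpomset σ} :
      Rec rest R' → GlueRel ((X.ev y).starter A) R' R → Rec (Path.up y A h rest) R
  | down {z w : X.cell} (y : X.cell) (B : Set (X.ev y).carrier)
      (h : X.face y ∅ B = some z) (rest : Path X z w) {R' R : PreIpomset σ} :
      Rec rest R' → GlueRel ((X.ev y).terminator B) R' R → Rec (Path.down y B h rest) R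

/-- The language of a partial HDA. -/
def lang (X : PrePHDA σ) : Set (PreIpomset σ) :=
  {R | ∃ x z, ∃ α : Path X x z, x ∈ X.start ∧ z ∈ X.accept ∧ Rec α R}

/-- `X(K,P)`: cells reachable from `K` by a path recognizing `P`. -/
def track (X : PrePHDA σ) (K : Set X.cell) (P : PreIpomset σ) : Set X.cell :=
  {x | ∃ s, ∃ α : Path X s x, s ∈ K ∧ Rec α P}

/-- Deterministic partial HDA: at most one initial cell per conclist, and lower
face maps are "injective" in the appropriate sense. -/
def Deterministic (X : PrePHDA σ) : Prop :=
  (∀ x y, x ∈ X.start → y ∈ X.start → Iso (X.ev x) (X.ev y) → x = y) ∧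
  (∀ (y y' : X.cell) (A : Set (X.ev y).carrier) (A' : Set (X.ev y').carrier)
      (x : X.cell), X.face y A ∅ = some x → X.face y' A' ∅ = some x →
    (∃ f : (X.ev y).carrier ≃ (X.ev y').carrier,
      (∀ u v, (X.ev y).evord u v ↔ (X.ev y').evord (f u) (f v)) ∧
      (∀ u, (X.ev y').lab (f u) = (X.ev y).lab u) ∧ f '' A = A') → y = y')

end PrePHDA

/-! ### Relational HDAs -/

/-- The data of a relational HDA: face relations instead of partial face maps. -/
structure PreRHDA (σ : Type) : Type 1 where
  cell : Type
  ev : cell → PreIpomset σ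
  face : (x : cell) → Set (ev x).carrier → Set (ev x).carrier → Set cell
  start : Set cell
  accept : Set cell

namespace PreRHDA

variable {σ : Type}

/-- The axioms of a relational HDA, with the lax precubical identity
`δ_{C,D} ∘ δ_{A,B} ⊆ δ_{A∪C,B∪D}`. -/
def IsRHDA (X : PreRHDA σ) : Prop :=
  (∀ x, (X.ev x).IsConclist) ∧
  (∀ x, X.face x ∅ ∅ = {x}) ∧
  (∀ x A B y, y ∈ X.face x A B →
    Disjoint A B ∧ ∃ g, IsFaceEmbed (X.ev x) (A ∪ B) (X.ev y) g) ∧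
  (∀ x (A B : Set (X.ev x).carrier) y, y ∈ X.face x A B →
    ∀ g, IsFaceEmbed (X.ev x) (A ∪ B) (X.ev y) g →
      ∀ (C D : Set (X.ev y).carrier) z, z ∈ X.face y C D →
        z ∈ X.face x (A ∪ g '' C) (B ∪ g '' D))

/-- Paths in a relational HDA. -/
inductive Path (X : PreRHDA σ) : X.cell → X.cell → Type 1
  | nil (x : X.cell) : Path X x x
  | up {x z : X.cell} (y : X.cell) (A : Set (X.ev y).carrier)
      (h : x ∈ X.face y A ∅) (rest : Path X y z) : Path X x z
  | down {z w : X.cell} (y : X.cell) (B : Set (X.ev y).carrier)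
      (h : z ∈ X.face y ∅ B) (rest : Path X z w) : Path X y w

/-- The ipomset recognized by a path in a relational HDA. -/
inductive Rec {X : PreRHDA σ} : ∀ {x z : X.cell}, Path X x z → PreIpomset σ → Prop
  | nil (x : X.cell) (R : PreIpomset σ) :
      Iso (X.ev x).idOf R → Rec (Path.nil x) R
  | up {x z : X.cell} (y : X.cell) (A : Set (X.ev y).carrier)
      (h : x ∈ X.face y A ∅) (rest : Path X y z) {R' R : PreIpomset σ} :
      Rec rest R' → GlueRel ((X.ev y).starter A) R' R → Rec (Path.up y A h rest) R
  | down {z w : X.cell} (y : X.cell) (B : Set (X.ev y).carrier)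
      (h : z ∈ X.face y ∅ B) (rest : Path X z w) {R' R : PreIpomset σ} :
      Rec rest R' → GlueRel ((X.ev y).terminator B) R' R → Rec (Path.down y B h rest) R

/-- The language of a relational HDA. -/
def lang (X : PreRHDA σ) : Set (PreIpomset σ) :=
  {R | ∃ x z, ∃ α : Path X x z, x ∈ X.start ∧ z ∈ X.accept ∧ Rec α R}

/-- The ST-automaton `ST(X)` of a relational HDA `X`: states are cells, transitions
mimic the starting and terminating of events. -/
def stAut (X : PreRHDA σ) : PAutomaton σ where
  Q := X.cell
  E := (Σ q : X.cell, Σ A : Set (X.ev q).carrier, {p : X.cell // p ∈ X.face q A ∅}) ⊕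
       (Σ q : X.cell, Σ B : Set (X.ev q).carrier, {r : X.cell // r ∈ X.face q ∅ B})
  src := Sum.elim (fun t => t.2.2.val) fun t => t.1
  tgt := Sum.elim (fun t => t.1) fun t => t.2.2.val
  lab := Sum.elim (fun t => (X.ev t.1).starter t.2.1) fun t => (X.ev t.1).terminator t.2.1
  mu := X.ev
  start := X.start
  accept := X.accept

end PreRHDA

/-! ### The partial HDA of a reduced gST-automaton -/

open PAutomaton

/-- The cell representing a state `q` in `X(𝒜)`: `q` is merged with a terminator
transition out of it or a starter transition into it, if such exists. -/
noncomputable def cellOfState (A : PAutomaton σ) (q : A.Q) : A.E ⊕ A.Q :=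
  if h : ∃ e, IsTerminator (A.lab e) ∧ A.src e = q then Sum.inl h.choose
  else if h' : ∃ e, IsStarter (A.lab e) ∧ A.tgt e = q then Sum.inl h'.choose
  else Sum.inr q

/-- `X(𝒜)`: cells are `(Q ⊔ E)/∼`, with the only defined (nontrivial) face maps
`δ⁰_{U∖S}([e]) = [s(e)]` and `δ¹_{U∖T}([e]) = [t(e)]` for `λ(e) = ⟨S,U,T⟩`. -/
noncomputable def XofA (A : PAutomaton σ) : PrePHDA σ where
  cell := A.E ⊕ A.Q
  ev := Sum.elim (fun e => (A.lab e).conclistOf) A.mu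
  face := fun x =>
    match x with
    | Sum.inl e => fun As Bs =>
        if As = ∅ ∧ Bs = ∅ then some (Sum.inl e)
        else if As = (A.lab e).Sᶜ ∧ Bs = ∅ then some (cellOfState A (A.src e))
        else if As = ∅ ∧ Bs = (A.lab e).Tᶜ then some (cellOfState A (A.tgt e))
        else none
    | Sum.inr q => fun As Bs =>
        if As = ∅ ∧ Bs = ∅ then some (Sum.inr q) else none
  start := cellOfState A '' A.start
  accept := cellOfState A '' A.accept

end HDA

/-! Upsteps `x ↗ᴬ y` of `X` and starter transitions `(x, ⟨ev y ∖ A, ev y, ev y⟩, y)` of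
`ST(X)` are the same data, and likewise downsteps and terminator transitions. Both notions of
recognition glue the step labels in the same way, so translating a path step by step is a
bijection preserving recognized ipomsets; the languages agree because `ST(X)` has the initial
and accepting states of `X`. -/

namespace HDA

open PreIpomset

variable {σ : Type}

namespace PAutomaton

variable {A : PAutomaton σ}

/-- `cases` cannot invert `Rec (Path.cons e rest) R` directly, as its source index `A.src e` is
not a variable; here the indices are generalized. -/
theorem Rec.inv {p r : A.Q} {γ : Path A p r} {R : PreIpomset σ} (h : Rec γ R) :
    match p, r, γ with
    | _, _, .nil q => Iso (A.mu q).idOf R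
    | _, _, .cons e rest => ∃ R', Rec rest R' ∧ GlueRel (A.lab e) R' R := by
  cases h with
  | nil _ _ hiso => exact hiso
  | cons _ _ hrest hglue => exact ⟨_, hrest, hglue⟩

theorem rec_nil_iff {q : A.Q} {R : PreIpomset σ} :
    Rec (Path.nil q) R ↔ Iso (A.mu q).idOf R :=
  ⟨Rec.inv, Rec.nil q R⟩

theorem rec_cons_iff {e : A.E} {r : A.Q} {rest : Path A (A.tgt e) r} {R : PreIpomset σ} :
    Rec (Path.cons e rest) R ↔ ∃ R', Rec rest R' ∧ GlueRel (A.lab e) R' R :=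
  ⟨Rec.inv, fun ⟨_, hrest, hglue⟩ => Rec.cons e rest hrest hglue⟩

end PAutomaton

namespace PreRHDA

variable {X : PreRHDA σ}

theorem rec_nil_iff {x : X.cell} {R : PreIpomset σ} :
    Rec (Path.nil x) R ↔ Iso (X.ev x).idOf R :=
  ⟨fun | .nil _ _ hiso => hiso, Rec.nil x R⟩

theorem rec_up_iff {x z y : X.cell} {A : Set (X.ev y).carrier} {h : x ∈ X.face y A ∅}
    {rest : Path X y z} {R : PreIpomset σ} :
    Rec (Path.up y A h rest) R ↔ ∃ R', Rec rest R' ∧ GlueRel ((X.ev y).starter A) R' R :=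
  ⟨fun | .up _ _ _ _ hrest hglue => ⟨_, hrest, hglue⟩,
    fun ⟨_, hrest, hglue⟩ => Rec.up y A h rest hrest hglue⟩

theorem rec_down_iff {z w y : X.cell} {B : Set (X.ev y).carrier} {h : z ∈ X.face y ∅ B}
    {rest : Path X z w} {R : PreIpomset σ} :
    Rec (Path.down y B h rest) R ↔
      ∃ R', Rec rest R' ∧ GlueRel ((X.ev y).terminator B) R' R :=
  ⟨fun | .down _ _ _ _ hrest hglue => ⟨_, hrest, hglue⟩,
    fun ⟨_, hrest, hglue⟩ => Rec.down y B h rest hrest hglue⟩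

def Path.toST : ∀ {x z : X.cell}, Path X x z → PAutomaton.Path X.stAut x z
  | _, _, .nil x => PAutomaton.Path.nil (A := X.stAut) x
  | _, _, .up (x := x) y A h rest => .cons (A := X.stAut) (Sum.inl ⟨y, A, x, h⟩) rest.toST
  | _, _, .down (z := z) y B h rest => .cons (A := X.stAut) (Sum.inr ⟨y, B, z, h⟩) rest.toST

def Path.ofST : ∀ {x z : X.cell}, PAutomaton.Path X.stAut x z → Path X x z
  | _, _, .nil x => .nil x
  | _, _, .cons (Sum.inl ⟨y, A, _, h⟩) rest => .up y A h (Path.ofST rest)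
  | _, _, .cons (Sum.inr ⟨y, B, _, h⟩) rest => .down y B h (Path.ofST rest)

theorem Path.ofST_toST : ∀ {x z : X.cell} (α : Path X x z), Path.ofST α.toST = α
  | _, _, .nil _ => rfl
  | _, _, .up y A h rest => congrArg (Path.up y A h) (ofST_toST rest)
  | _, _, .down y B h rest => congrArg (Path.down y B h) (ofST_toST rest)

theorem Path.toST_ofST : ∀ {x z : X.cell} (β : PAutomaton.Path X.stAut x z),
    (Path.ofST β).toST = β
  | _, _, .nil _ => rfl
  | _, _, .cons (Sum.inl e) rest =>
    congrArg (PAutomaton.Path.cons (A := X.stAut) (Sum.inl e)) (toST_ofST rest)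
  | _, _, .cons (Sum.inr e) rest =>
    congrArg (PAutomaton.Path.cons (A := X.stAut) (Sum.inr e)) (toST_ofST rest)

def pathEquivST (x z : X.cell) : Path X x z ≃ PAutomaton.Path X.stAut x z where
  toFun := Path.toST
  invFun := Path.ofST
  left_inv := Path.ofST_toST
  right_inv := Path.toST_ofST

theorem rec_toST_iff {x z : X.cell} (α : Path X x z) (R : PreIpomset σ) :
    PAutomaton.Rec α.toST R ↔ Rec α R := by
  induction α generalizing R with
  | nil x => exact (PAutomaton.rec_nil_iff (A := X.stAut)).trans rec_nil_iff.symm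
  | up y A h rest ih =>
    exact (PAutomaton.rec_cons_iff (A := X.stAut)).trans
      ((exists_congr fun R' => and_congr_left' (ih R')).trans rec_up_iff.symm)
  | down y B h rest ih =>
    exact (PAutomaton.rec_cons_iff (A := X.stAut)).trans
      ((exists_congr fun R' => and_congr_left' (ih R')).trans rec_down_iff.symm)

theorem lang_stAut (X : PreRHDA σ) : X.stAut.lang = X.lang := by
  ext R
  simp only [PAutomaton.lang, lang, Set.mem_ofPred_eq]
  refine exists_congr fun x => exists_congr fun z => ?_
  rw [← (pathEquivST x z).exists_congr_right]
  exact exists_congr fun α => and_congr_right' (and_congr_right' (rec_toST_iff α R))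

end PreRHDA

theorem st_automaton_correspondence_general {σ : Type} (X : PreRHDA σ) :
    (∀ x y : X.cell, ∃ F : PreRHDA.Path X x y ≃ PAutomaton.Path X.stAut x y,
      ∀ (α : PreRHDA.Path X x y) (R : PreIpomset σ),
        PreRHDA.Rec α R ↔ PAutomaton.Rec (F α) R) ∧
    X.stAut.lang = X.lang :=
  ⟨fun x y => ⟨PreRHDA.pathEquivST x y, fun α R => (PreRHDA.rec_toST_iff α R).symm⟩,
    X.lang_stAut⟩

/-- For a relational HDA `X`, there is a one-to-one correspondence
between paths in `X` and paths in `ST(X)` preserving sources, targets and recognized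
ipomsets (hence acceptance); in particular `L(ST(X)) = L(X)`. -/
theorem st_automaton_correspondence {σ : Type} [Finite σ] (X : PreRHDA σ)
    (hX : X.IsRHDA) :
    (∀ x y : X.cell, ∃ F : PreRHDA.Path X x y ≃ PAutomaton.Path X.stAut x y,
      ∀ (α : PreRHDA.Path X x y) (R : PreIpomset σ),
        PreRHDA.Rec α R ↔ PAutomaton.Rec (F α) R) ∧
    X.stAut.lang = X.lang :=
  st_automaton_correspondence_general X

end HDA
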